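/- Let Q be a connected quiver with a linear order on E, k a field, and θ : V → ℝ generic with Σ_{i∈V} θ_i = 0. For every θ-stable toric representation (x, x*) of the double quiver of Q, the tree-assignment recursion is well defined and produces a spanning tree T = 𝑇(x, x*) of Q; moreover, for every e ∈ T: if e is θ-forward then x_e ≠ 0, and if e is θ-backward then x*_e ≠ 0. -/

import Mathlib

open Classical Finset

noncomputable section

/-- The equivalence relation on vertices generated by the edges in `D`:
`t e` and `h e` are related for every `e ∈ D`. -/
def joinedRel {V E : Type} (tl hd : E → V) (D : Set E) : V → V → Prop :=
  Relation.EqvGen fun a b => ∃ e ∈ D, (tl e = a ∧ hd e = b) ∨ (tl e = b ∧ hd e = a)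

/-- The graph `(V, D)` is connected. -/
def IsConn {V E : Type} (tl hd : E → V) (D : Set E) : Prop :=
  ∀ a b : V, joinedRel tl hd D a b

/-- `T ⊆ E` is a spanning tree: `(V, T)` is connected and `#T = #V - 1`. -/
def IsSpanningTree {V E : Type} [Fintype V] (tl hd : E → V) (T : Finset E) : Prop :=
  IsConn tl hd ↑T ∧ T.card + 1 = Fintype.card V

/-- The connected component of the vertex `v` in the graph with edge set `D`. -/
def component {V E : Type} [Fintype V] (tl hd : E → V) (D : Finset E) (v : V) : Finset V :=
  Finset.univ.filter fun j => joinedRel tl hd (↑D) v j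

/-- Genericity of a stability parameter. -/
def Generic {V : Type} [Fintype V] (θ : V → ℝ) : Prop :=
  ∀ J : Finset V, J.Nonempty → J ≠ Finset.univ → ∑ i ∈ J, θ i ≠ 0

/-- Auxiliary recursion computing the external activity: `S` is the set of remaining
edges and `C` the set of already contracted edges (an edge of the current, partially
contracted, quiver is a loop iff its endpoints are joined by edges of `C`).  At each
step the largest non-loop edge is contracted (if it lies in `T`) or deleted (otherwise);
once no non-loop edge remains (i.e. the contracted quiver has one vertex), the number of
remaining (loop) edges is returned. -/
def extactAux {V E : Type} [LinearOrder E] (tl hd : E → V) (T : Finset E)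
    (S C : Finset E) : ℕ :=
  if hne : (S.filter fun e => ¬ joinedRel tl hd (↑C) (tl e) (hd e)).Nonempty then
    if (S.filter fun e => ¬ joinedRel tl hd (↑C) (tl e) (hd e)).max' hne ∈ T then
      extactAux tl hd T
        (S.erase ((S.filter fun e => ¬ joinedRel tl hd (↑C) (tl e) (hd e)).max' hne))
        (insert ((S.filter fun e => ¬ joinedRel tl hd (↑C) (tl e) (hd e)).max' hne) C)
    else
      extactAux tl hd T
        (S.erase ((S.filter fun e => ¬ joinedRel tl hd (↑C) (tl e) (hd e)).max' hne)) C
  else S.card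
termination_by S.card
decreasing_by
  · exact Finset.card_lt_card (Finset.erase_ssubset
      (Finset.mem_of_mem_filter _ (Finset.max'_mem _ hne)))
  · exact Finset.card_lt_card (Finset.erase_ssubset
      (Finset.mem_of_mem_filter _ (Finset.max'_mem _ hne)))

/-- The external activity `extact(Q, T)` of a spanning tree `T`, with respect to a fixed
linear order on the edges. -/
def extact {V E : Type} [Fintype E] [LinearOrder E] (tl hd : E → V) (T : Finset E) : ℕ :=
  extactAux tl hd T Finset.univ ∅

/-- Isomorphism of toric representations. -/
def IsoRep {V E k : Type} [Field k] (tl hd : E → V) (x x' : E → k) : Prop :=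
  ∃ g : V → kˣ, ∀ e, x' e = (g (hd e) : k) * x e * ((g (tl e) : k))⁻¹

/-- Gauge equivalence (the `(kˣ)^V`-action) for representations of the double quiver. -/
def GaugeEquiv {V E k : Type} [Field k] (tl hd : E → V) (x xs x' xs' : E → k) : Prop :=
  ∃ g : V → kˣ,
    (∀ e, x' e = (g (hd e) : k) * x e * ((g (tl e) : k))⁻¹) ∧
    (∀ e, xs' e = (g (tl e) : k) * xs e * ((g (hd e) : k))⁻¹)

/-- The moment map equations for the parameter `lam`. -/
def MomentMap {V E k : Type} [Fintype E] [Field k] (tl hd : E → V) (lam : V → k)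
    (x xs : E → k) : Prop :=
  ∀ i : V,
    (∑ e ∈ Finset.univ.filter fun e => hd e = i, x e * xs e) -
      (∑ e ∈ Finset.univ.filter fun e => tl e = i, x e * xs e) = lam i

/-- `J` is closed for `(x, xs)`, with only the conditions for edges in `S` imposed. -/
def ClosedOn {V E k : Type} [Zero k] (tl hd : E → V) (x xs : E → k) (S : Set E)
    (J : Finset V) : Prop :=
  ∀ e ∈ S, (x e ≠ 0 → tl e ∈ J → hd e ∈ J) ∧ (xs e ≠ 0 → hd e ∈ J → tl e ∈ J)

/-- `θ`-stability of `(x, xs)` on the subquiver with vertex set `W` and edge set `S`. -/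
def StableSub {V E k : Type} [Zero k] (tl hd : E → V) (θ : V → ℝ) (x xs : E → k)
    (W : Finset V) (S : Set E) : Prop :=
  ∀ J : Finset V, J ⊆ W → ClosedOn tl hd x xs S J → J.Nonempty → J ≠ W →
    0 < ∑ i ∈ J, θ i

/-- Destabilising subsets for `(x, xs)` on the subquiver `(W, S)`. -/
def DestabSub {V E k : Type} [Zero k] (tl hd : E → V) (θ : V → ℝ) (x xs : E → k)
    (W : Finset V) (S : Set E) (J : Finset V) : Prop :=
  J ⊆ W ∧ J.Nonempty ∧ J ≠ W ∧ ClosedOn tl hd x xs S J ∧ ∑ i ∈ J, θ i ≤ 0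

/-- The projection identifying the vertex `a` with the vertex `b`, i.e. the quotient map
`V → V/e` for the contraction of an edge with tail `a` and head `b` (the quotient being
modelled on the subtype of vertices different from `a`). -/
def cProj {V : Type} (a b : V) (h : b ≠ a) (i : V) : {j : V // j ≠ a} :=
  if hi : i = a then ⟨b, h⟩ else ⟨i, hi⟩

/-- Tail map of the contracted quiver `Q/e`. -/
def contractTl {V E : Type} (tl hd : E → V) (e : E) (h : hd e ≠ tl e)
    (f : {f : E // f ≠ e}) : {j : V // j ≠ tl e} := cProj (tl e) (hd e) h (tl f.1)

/-- Head map of the contracted quiver `Q/e`. -/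
def contractHd {V E : Type} (tl hd : E → V) (e : E) (h : hd e ≠ tl e)
    (f : {f : E // f ≠ e}) : {j : V // j ≠ tl e} := cProj (tl e) (hd e) h (hd f.1)

/-- Contraction `θ/e` (or `λ/e`) of a parameter along the contraction of an edge with
tail `a` and head `b`: the new vertex `ι` (represented by `b`) gets the value
`θ a + θ b`, all other vertices keep their values. -/
def contractParam {V R : Type} [Add R] (a b : V) (θ : V → R) (j : {i : V // i ≠ a}) : R :=
  if (j : V) = b then θ a + θ b else θ (j : V)

/-- The graph of the tree-assignment recursion: `TreeAssign tl hd x xs W S θ T` means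
that the recursion, applied to the restriction of `(x, xs)` to the subquiver with vertex
set `W` and edge set `S` and with stability parameter `θ` (and the linear order induced
from `E`), produces the spanning tree `T`. -/
inductive TreeAssign {V E k : Type} [Fintype V] [LinearOrder E] [Zero k]
    (tl hd : E → V) (x xs : E → k) :
    Finset V → Finset E → (V → ℝ) → Finset E → Prop
  | base (W : Finset V) (S : Finset E) (θ : V → ℝ) (hW : W.card = 1) :
      TreeAssign tl hd x xs W S θ ∅
  | delete (W : Finset V) (S : Finset E) (θ : V → ℝ) (e : E)
      (he : e ∈ S) (hloop : tl e ≠ hd e)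
      (hsmall : ∀ f ∈ S, tl f ≠ hd f → e ≤ f)
      (hstab : StableSub tl hd θ x xs W ↑(S.erase e))
      (T : Finset E) (ih : TreeAssign tl hd x xs W (S.erase e) θ T) :
      TreeAssign tl hd x xs W S θ T
  | contract (W : Finset V) (S : Finset E) (θ : V → ℝ) (e : E) (a b : V)
      (he : e ∈ S) (hloop : tl e ≠ hd e)
      (hsmall : ∀ f ∈ S, tl f ≠ hd f → e ≤ f)
      (hab : (a = tl e ∧ b = hd e) ∨ (a = hd e ∧ b = tl e))
      (J₁ : Finset V)
      (hJ₁ : DestabSub tl hd θ x xs W ↑(S.erase e) J₁)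
      (hall : ∀ J, DestabSub tl hd θ x xs W ↑(S.erase e) J → a ∈ J ∧ b ∉ J)
      (hmin : ∀ J, DestabSub tl hd θ x xs W ↑(S.erase e) J →
        ∑ i ∈ J₁, θ i ≤ ∑ i ∈ J, θ i)
      (T₁ T₂ : Finset E)
      (ih₁ : TreeAssign tl hd x xs J₁ (S.filter fun f => tl f ∈ J₁ ∧ hd f ∈ J₁)
          (fun i => if i = a then θ i - ∑ j ∈ J₁, θ j
            else if i = b then θ i + ∑ j ∈ J₁, θ j else θ i) T₁)
      (ih₂ : TreeAssign tl hd x xs (W \ J₁)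
          (S.filter fun f => tl f ∈ W \ J₁ ∧ hd f ∈ W \ J₁)
          (fun i => if i = a then θ i - ∑ j ∈ J₁, θ j
            else if i = b then θ i + ∑ j ∈ J₁, θ j else θ i) T₂) :
      TreeAssign tl hd x xs W S θ (insert e (T₁ ∪ T₂))

/-- Points of the cell `M_T`: `θ`-stable pairs satisfying the moment map equations whose
assigned spanning tree is `T`. -/
def CellPt {V E k : Type} [Fintype V] [Fintype E] [LinearOrder E] [Field k]
    (tl hd : E → V) (lam : V → k) (θ : V → ℝ) (T : Finset E) : Type :=
  {p : (E → k) × (E → k) //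
    StableSub tl hd θ p.1 p.2 Finset.univ Set.univ ∧
    MomentMap tl hd lam p.1 p.2 ∧
    TreeAssign tl hd p.1 p.2 Finset.univ Finset.univ θ T}

/-- The cell `M_T` of the Nakajima orbit set: `(kˣ)^V`-orbits of points. -/
def Cell {V E k : Type} [Fintype V] [Fintype E] [LinearOrder E] [Field k]
    (tl hd : E → V) (lam : V → k) (θ : V → ℝ) (T : Finset E) : Type :=
  Quot fun p q : CellPt tl hd lam θ T => GaugeEquiv tl hd p.1.1 p.1.2 q.1.1 q.1.2

/-!
Deleting the smallest non-loop edge `e` preserves stability unless some set closed for the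
remaining edges has weight `≤ 0`. Such a set is not closed for `e`, so it separates the endpoints
of `e`; the union/intersection trick (using `∑ θ = 0` and genericity) shows that all of them
contain the same endpoint `a`, and that the one of minimal weight `β`, `J₁`, is unique, so the
recursion is deterministic. Moving `β` from `a` to the other endpoint `b` makes `J₁` and its
complement stable and generic, so by induction they carry spanning trees, which `e` joins.
The edge `e` is forward exactly when it points from `a` to `b`, and then `x e ≠ 0`, since
otherwise `J₁` would be closed for all edges (dually for backward). For an edge of one piece, the
head side in the joined tree contains the other piece exactly when it contains `a` (resp. `b`),
which is what the shift by `β` accounts for.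
-/

section Graphs

variable {V E : Type} {tl hd : E → V}

def Joins (tl hd : E → V) (e : E) (a b : V) : Prop :=
  (a = tl e ∧ b = hd e) ∨ (a = hd e ∧ b = tl e)

def EdgesIn (tl hd : E → V) (D : Finset E) (W : Finset V) : Prop :=
  ∀ f ∈ D, tl f ∈ W ∧ hd f ∈ W

def Spans (tl hd : E → V) (D : Finset E) (W : Finset V) : Prop :=
  ∀ u ∈ W, ∀ v ∈ W, joinedRel tl hd ↑D u v

def restrictEdges (tl hd : E → V) (S : Finset E) (A : Finset V) : Finset E :=
  S.filter fun f => tl f ∈ A ∧ hd f ∈ A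

lemma Joins.symm {e : E} {a b : V} (h : Joins tl hd e a b) : Joins tl hd e b a :=
  (Or.symm h).imp And.symm And.symm

lemma Joins.mem_of_edgesIn {D : Finset E} {W : Finset V} {e : E} {a b : V}
    (h : Joins tl hd e a b) (hD : EdgesIn tl hd D W) (he : e ∈ D) : a ∈ W ∧ b ∈ W := by
  rcases h with ⟨rfl, rfl⟩ | ⟨rfl, rfl⟩
  exacts [hD e he, (hD e he).symm]

lemma Joins.notMem_of_edgesIn {D : Finset E} {A : Finset V} {e : E} {a b : V}
    (h : Joins tl hd e a b) (hD : EdgesIn tl hd D A) (hb : b ∉ A) : e ∉ D := fun he =>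
  hb (h.symm.mem_of_edgesIn hD he).1

lemma Joins.mem_iff_mem {e : E} {a b : V} {J : Finset V} (h : Joins tl hd e a b)
    (hab : a ∈ J ↔ b ∈ J) : tl e ∈ J ↔ hd e ∈ J := by
  rcases h with ⟨rfl, rfl⟩ | ⟨rfl, rfl⟩
  exacts [hab, hab.symm]

lemma Joins.eq_of_mem {e : E} {a b a' b' : V} {J : Finset V} (h : Joins tl hd e a b)
    (h' : Joins tl hd e a' b') (ha' : a' ∈ J) (hb : b ∉ J) : a = a' ∧ b = b' := by
  rcases h with ⟨rfl, rfl⟩ | ⟨rfl, rfl⟩ <;> rcases h' with ⟨rfl, rfl⟩ | ⟨rfl, rfl⟩ <;>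
    simp_all

lemma joinedRel_of_joins {D : Set E} {e : E} {a b : V} (he : e ∈ D) (h : Joins tl hd e a b) :
    joinedRel tl hd D a b :=
  .rel _ _ ⟨e, he, h.imp (fun h => ⟨h.1.symm, h.2.symm⟩) fun h => ⟨h.2.symm, h.1.symm⟩⟩

lemma joinedRel_mono {D D' : Set E} (h : D ⊆ D') {a b : V} (hab : joinedRel tl hd D a b) :
    joinedRel tl hd D' a b :=
  Relation.EqvGen.mono (fun _ _ ⟨e, he, h'⟩ => ⟨e, h he, h'⟩) _ _ hab

lemma mem_iff_mem_of_joinedRel {D : Set E} {A : Finset V}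
    (hA : ∀ f ∈ D, (tl f ∈ A ↔ hd f ∈ A)) {a b : V} (hab : joinedRel tl hd D a b) :
    a ∈ A ↔ b ∈ A := by
  induction hab with
  | rel a b h =>
    obtain ⟨f, hf, ⟨rfl, rfl⟩ | ⟨rfl, rfl⟩⟩ := h
    exacts [hA f hf, (hA f hf).symm]
  | refl => rfl
  | symm _ _ _ ih => exact ih.symm
  | trans _ _ _ _ _ ih₁ ih₂ => exact ih₁.trans ih₂

lemma EdgesIn.mono {D D' : Finset E} {W : Finset V} (h : EdgesIn tl hd D W) (hD : D' ⊆ D) :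
    EdgesIn tl hd D' W := fun f hf => h f (hD hf)

lemma edgesIn_restrictEdges (S : Finset E) (A : Finset V) :
    EdgesIn tl hd (restrictEdges tl hd S A) A := fun _ hf => (mem_filter.1 hf).2

lemma EdgesIn.disjoint {D₁ D₂ : Finset E} {A B : Finset V} (hAB : Disjoint A B)
    (h₁ : EdgesIn tl hd D₁ A) (h₂ : EdgesIn tl hd D₂ B) : Disjoint D₁ D₂ :=
  disjoint_left.2 fun _ hf₁ hf₂ => disjoint_left.1 hAB (h₁ _ hf₁).1 (h₂ _ hf₂).1

lemma EdgesIn.tl_eq_hd_of_card_eq_one {D : Finset E} {W : Finset V} (hD : EdgesIn tl hd D W)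
    (hW : W.card = 1) {e : E} (he : e ∈ D) : tl e = hd e :=
  card_le_one.1 hW.le _ (hD e he).1 _ (hD e he).2

lemma card_restrictEdges_lt {S : Finset E} {A : Finset V} {e : E} (he : e ∈ S)
    (he' : e ∉ restrictEdges tl hd S A) : (restrictEdges tl hd S A).card < S.card :=
  card_lt_card (filter_ssubset.2 ⟨e, he, fun h => he' (mem_filter.2 ⟨he, h⟩)⟩)

variable [Fintype V]

lemma mem_component {D : Finset E} {v w : V} :
    w ∈ component tl hd D v ↔ joinedRel tl hd ↑D v w := by
  simp [component]

lemma component_saturated (D : Finset E) (v : V) :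
    ∀ f ∈ D, (tl f ∈ component tl hd D v ↔ hd f ∈ component tl hd D v) := fun f hf => by
  simp only [mem_component]
  exact ⟨fun h => .trans _ _ _ h (joinedRel_of_joins hf (Or.inl ⟨rfl, rfl⟩)),
    fun h => .trans _ _ _ h (joinedRel_of_joins hf (Or.inr ⟨rfl, rfl⟩))⟩

lemma component_eq_of_saturated {D : Finset E} {v : V} {K : Finset V} (hv : v ∈ K)
    (hsat : ∀ f ∈ D, (tl f ∈ K ↔ hd f ∈ K)) (hjoin : ∀ w ∈ K, joinedRel tl hd ↑D v w) :
    component tl hd D v = K := by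
  ext w
  rw [mem_component]
  exact ⟨fun h => (mem_iff_mem_of_joinedRel hsat h).1 hv, hjoin w⟩

lemma component_subset_of_edgesIn {D : Finset E} {A : Finset V} (hD : EdgesIn tl hd D A)
    {v : V} (hv : v ∈ A) : component tl hd D v ⊆ A := fun _ hw =>
  (mem_iff_mem_of_joinedRel (fun f hf => iff_of_true (hD f hf).1 (hD f hf).2)
    (mem_component.1 hw)).1 hv

lemma component_union_of_spans [DecidableEq E] {A B : Finset V} {D₁ D₂ : Finset E}
    (hAB : Disjoint A B) (hD₁ : EdgesIn tl hd D₁ A) (hD₂ : EdgesIn tl hd D₂ B)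
    (hspan : Spans tl hd D₁ A) {v : V} (hv : v ∈ A) : component tl hd (D₁ ∪ D₂) v = A := by
  refine component_eq_of_saturated hv (fun f hf => ?_) fun w hw =>
    joinedRel_mono (by simp) (hspan v hv w hw)
  rcases mem_union.1 hf with hf | hf
  · exact iff_of_true (hD₁ f hf).1 (hD₁ f hf).2
  · exact iff_of_false (disjoint_right.1 hAB (hD₂ f hf).1) (disjoint_right.1 hAB (hD₂ f hf).2)

lemma component_insert_union [DecidableEq E] {A B : Finset V} {D₁ D₂ : Finset E} {e : E}
    {a b v : V} (hAB : Disjoint A B) (hD₁ : EdgesIn tl hd D₁ A) (hD₂ : EdgesIn tl hd D₂ B)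
    (hspan : Spans tl hd D₂ B) (he : Joins tl hd e a b) (hb : b ∈ B) (hv : v ∈ A) :
    component tl hd (insert e (D₁ ∪ D₂)) v =
      if a ∈ component tl hd D₁ v then component tl hd D₁ v ∪ B else component tl hd D₁ v := by
  set K := component tl hd D₁ v
  have hKB : ∀ w ∈ K, w ∉ B := fun w hw =>
    disjoint_left.1 hAB (component_subset_of_edgesIn hD₁ hv hw)
  have hsub : (↑D₁ : Set E) ⊆ ↑(insert e (D₁ ∪ D₂)) :=
    coe_subset.2 fun f hf => by simp [hf]
  have hsat₁ := component_saturated D₁ v (tl := tl) (hd := hd)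
  split_ifs with haK
  · refine component_eq_of_saturated (mem_union_left _ (mem_component.2 (.refl v)))
      (fun f hf => ?_) fun w hw => ?_
    · rcases mem_insert.1 hf with rfl | hf
      · rcases he with ⟨rfl, rfl⟩ | ⟨rfl, rfl⟩ <;> simp [haK, hb]
      rcases mem_union.1 hf with hf | hf
      · have h₁ := disjoint_left.1 hAB (hD₁ f hf).1
        have h₂ := disjoint_left.1 hAB (hD₁ f hf).2
        simpa [h₁, h₂] using hsat₁ f hf
      · simp [(hD₂ f hf).1, (hD₂ f hf).2]
    · rcases mem_union.1 hw with hw | hw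
      · exact joinedRel_mono hsub (mem_component.1 hw)
      · refine .trans _ _ _ (joinedRel_mono hsub (mem_component.1 haK)) (.trans _ _ _
          (joinedRel_of_joins (by simp) he)
          (joinedRel_mono (coe_subset.2 fun f hf => by simp [hf]) (hspan b hb w hw)))
  · refine component_eq_of_saturated (mem_component.2 (.refl v)) (fun f hf => ?_)
      fun w hw => joinedRel_mono hsub (mem_component.1 hw)
    rcases mem_insert.1 hf with rfl | hf
    · have hbK : b ∉ K := fun h => hKB b h hb
      rcases he with ⟨rfl, rfl⟩ | ⟨rfl, rfl⟩ <;> simp [haK, hbK]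
    rcases mem_union.1 hf with hf | hf
    · exact hsat₁ f hf
    · exact iff_of_false (fun h => hKB _ h (hD₂ f hf).1) fun h => hKB _ h (hD₂ f hf).2

end Graphs

section Stability

variable {V E k : Type} [Zero k] {tl hd : E → V} {x xs : E → k} {θ : V → ℝ}

def GenericOn (W : Finset V) (θ : V → ℝ) : Prop :=
  ∀ J ⊆ W, J.Nonempty → J ≠ W → ∑ i ∈ J, θ i ≠ 0

lemma GenericOn.eq_empty {W J : Finset V} (hgen : GenericOn W θ) (hJW : J ⊆ W) (hne : J ≠ W)
    (h0 : ∑ i ∈ J, θ i = 0) : J = ∅ :=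
  not_nonempty_iff_eq_empty.1 fun hJ => hgen J hJW hJ hne h0

lemma ClosedOn.mono {S S' : Set E} {J : Finset V} (h : ClosedOn tl hd x xs S J) (hS : S' ⊆ S) :
    ClosedOn tl hd x xs S' J := fun e he => h e (hS he)

lemma ClosedOn.inter {S : Set E} {J J' : Finset V} (h : ClosedOn tl hd x xs S J)
    (h' : ClosedOn tl hd x xs S J') : ClosedOn tl hd x xs S (J ∩ J') := fun e he => by
  simp only [mem_inter]
  exact ⟨fun hx ht => ⟨(h e he).1 hx ht.1, (h' e he).1 hx ht.2⟩,
    fun hx ht => ⟨(h e he).2 hx ht.1, (h' e he).2 hx ht.2⟩⟩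

lemma ClosedOn.union {S : Set E} {J J' : Finset V} (h : ClosedOn tl hd x xs S J)
    (h' : ClosedOn tl hd x xs S J') : ClosedOn tl hd x xs S (J ∪ J') := fun e he => by
  simp only [mem_union]
  exact ⟨fun hx => Or.imp ((h e he).1 hx) ((h' e he).1 hx),
    fun hx => Or.imp ((h e he).2 hx) ((h' e he).2 hx)⟩

lemma ClosedOn.of_restrictEdges {D : Finset E} {A J : Finset V}
    (hA : ClosedOn tl hd x xs ↑D A) (hJA : J ⊆ A)
    (hJ : ClosedOn tl hd x xs ↑(restrictEdges tl hd D A) J) : ClosedOn tl hd x xs ↑D J :=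
  fun f hf => by
    refine ⟨fun hx ht => (hJ f ?_).1 hx ht, fun hx hh => (hJ f ?_).2 hx hh⟩
    · exact mem_filter.2 ⟨hf, hJA ht, (hA f hf).1 hx (hJA ht)⟩
    · exact mem_filter.2 ⟨hf, (hA f hf).2 hx (hJA hh), hJA hh⟩

lemma ClosedOn.union_of_restrictEdges {D : Finset E} {W A J : Finset V}
    (hD : EdgesIn tl hd D W) (hA : ClosedOn tl hd x xs ↑D A) (hJ : J ⊆ W \ A)
    (hJcl : ClosedOn tl hd x xs ↑(restrictEdges tl hd D (W \ A)) J) :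
    ClosedOn tl hd x xs ↑D (J ∪ A) := fun f hf => by
  have hfW := hD f hf
  simp only [mem_union]
  constructor
  · rintro hx (ht | ht)
    · by_cases hh : hd f ∈ A
      · exact Or.inr hh
      · exact Or.inl ((hJcl f (mem_filter.2 ⟨hf, hJ ht, mem_sdiff.2 ⟨hfW.2, hh⟩⟩)).1 hx ht)
    · exact Or.inr ((hA f hf).1 hx ht)
  · rintro hxs (hh | hh)
    · by_cases ht : tl f ∈ A
      · exact Or.inr ht
      · exact Or.inl ((hJcl f (mem_filter.2 ⟨hf, mem_sdiff.2 ⟨hfW.1, ht⟩, hJ hh⟩)).2 hxs hh)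
    · exact Or.inr ((hA f hf).2 hxs hh)

lemma exists_destabSub_of_not_stableSub {W : Finset V} {S : Set E}
    (h : ¬ StableSub tl hd θ x xs W S) : ∃ J, DestabSub tl hd θ x xs W S J := by
  simp only [StableSub, not_forall, not_lt] at h
  obtain ⟨J, hJW, hcl, hne, hneW, hsum⟩ := h
  exact ⟨J, hJW, hne, hneW, hcl, hsum⟩

lemma DestabSub.not_stableSub {W : Finset V} {S : Set E} {J : Finset V}
    (hJ : DestabSub tl hd θ x xs W S J) : ¬ StableSub tl hd θ x xs W S := fun hS =>
  (hS J hJ.1 hJ.2.2.2.1 hJ.2.1 hJ.2.2.1).not_ge hJ.2.2.2.2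

lemma DestabSub.sum_neg {W : Finset V} {S : Set E} {J : Finset V}
    (hJ : DestabSub tl hd θ x xs W S J) (hgen : GenericOn W θ) : ∑ i ∈ J, θ i < 0 :=
  hJ.2.2.2.2.lt_of_ne (hgen J hJ.1 hJ.2.1 hJ.2.2.1)

lemma exists_nonloop {W : Finset V} {S : Set E} (hS : StableSub tl hd θ x xs W S)
    (hsum : ∑ i ∈ W, θ i = 0) (hW : W.Nonempty) (hW1 : W.card ≠ 1) :
    ∃ f ∈ S, tl f ≠ hd f := by
  by_contra! hloop
  have hpos : ∀ v ∈ W, 0 < θ v := fun v hv => by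
    have hcl : ClosedOn tl hd x xs S {v} := fun f hf =>
      ⟨fun _ ht => hloop f hf ▸ ht, fun _ hh => (hloop f hf).symm ▸ hh⟩
    have hneW : {v} ≠ W := fun h => hW1 (h ▸ card_singleton v)
    simpa using hS {v} (singleton_subset_iff.2 hv) hcl (singleton_nonempty v) hneW
  linarith [sum_pos hpos hW]

variable [DecidableEq E]

lemma ClosedOn.of_erase {S : Finset E} {e : E} {J : Finset V}
    (h : ClosedOn tl hd x xs ↑(S.erase e) J) (hx : x e ≠ 0 → tl e ∈ J → hd e ∈ J)
    (hxs : xs e ≠ 0 → hd e ∈ J → tl e ∈ J) : ClosedOn tl hd x xs ↑S J := fun f hf => by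
  by_cases hfe : f = e
  · exact hfe ▸ ⟨hx, hxs⟩
  · exact h f (by simpa [hfe] using hf)

lemma ClosedOn.of_erase_of_iff {S : Finset E} {e : E} {J : Finset V}
    (h : ClosedOn tl hd x xs ↑(S.erase e) J) (he : tl e ∈ J ↔ hd e ∈ J) :
    ClosedOn tl hd x xs ↑S J :=
  h.of_erase (fun _ => he.1) fun _ => he.2

variable {W : Finset V} {S : Finset E} {e : E} {J J' : Finset V}

lemma DestabSub.of_erase (hJ : DestabSub tl hd θ x xs W ↑(S.erase e) J)
    (hx : x e ≠ 0 → tl e ∈ J → hd e ∈ J) (hxs : xs e ≠ 0 → hd e ∈ J → tl e ∈ J) :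
    DestabSub tl hd θ x xs W ↑S J :=
  ⟨hJ.1, hJ.2.1, hJ.2.2.1, hJ.2.2.2.1.of_erase hx hxs, hJ.2.2.2.2⟩

lemma DestabSub.not_iff (hS : StableSub tl hd θ x xs W ↑S)
    (hJ : DestabSub tl hd θ x xs W ↑(S.erase e) J) : ¬ (tl e ∈ J ↔ hd e ∈ J) := fun he =>
  (hJ.of_erase (fun _ => he.1) fun _ => he.2).not_stableSub hS

lemma DestabSub.x_ne_zero (hS : StableSub tl hd θ x xs W ↑S)
    (hJ : DestabSub tl hd θ x xs W ↑(S.erase e) J) (hh : hd e ∉ J) : x e ≠ 0 := fun hx =>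
  (hJ.of_erase (fun h => absurd hx h) fun _ h => absurd h hh).not_stableSub hS

lemma DestabSub.xs_ne_zero (hS : StableSub tl hd θ x xs W ↑S)
    (hJ : DestabSub tl hd θ x xs W ↑(S.erase e) J) (ht : tl e ∉ J) : xs e ≠ 0 := fun hxs =>
  (hJ.of_erase (fun _ h => absurd h ht) fun h => absurd hxs h).not_stableSub hS

/-- Were `tl e ∈ J` and `tl e ∉ J'`, then `J ∩ J'` and `J ∪ J'` would be closed for `S`, with
negative total weight. -/
lemma DestabSub.tl_mem_iff (hS : StableSub tl hd θ x xs W ↑S) (hgen : GenericOn W θ)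
    (hsum : ∑ i ∈ W, θ i = 0) (hJ : DestabSub tl hd θ x xs W ↑(S.erase e) J)
    (hJ' : DestabSub tl hd θ x xs W ↑(S.erase e) J') : tl e ∈ J ↔ tl e ∈ J' := by
  suffices key : ∀ {J J'}, DestabSub tl hd θ x xs W ↑(S.erase e) J →
      DestabSub tl hd θ x xs W ↑(S.erase e) J' → tl e ∈ J → tl e ∈ J' from
    ⟨key hJ hJ', key hJ' hJ⟩
  intro J J' hJ hJ' ht
  by_contra ht'
  have hh : hd e ∉ J := fun hh => hJ.not_iff hS (iff_of_true ht hh)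
  have hh' : hd e ∈ J' := by_contra fun hh' => hJ'.not_iff hS (iff_of_false ht' hh')
  have hI : ClosedOn tl hd x xs ↑S (J ∩ J') :=
    (hJ.2.2.2.1.inter hJ'.2.2.2.1).of_erase_of_iff (iff_of_false (by simp [ht']) (by simp [hh]))
  have hU : ClosedOn tl hd x xs ↑S (J ∪ J') :=
    (hJ.2.2.2.1.union hJ'.2.2.2.1).of_erase_of_iff (iff_of_true (by simp [ht]) (by simp [hh']))
  have hI_nonneg : 0 ≤ ∑ i ∈ J ∩ J', θ i := by
    rcases (J ∩ J').eq_empty_or_nonempty with hIe | hIne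
    · simp [hIe]
    · refine (hS _ (inter_subset_left.trans hJ.1) hI hIne fun hIW => hh ?_).le
      exact mem_of_mem_inter_left (hIW ▸ hJ'.1 hh')
  have hU_nonneg : 0 ≤ ∑ i ∈ J ∪ J', θ i := by
    by_cases hUW : J ∪ J' = W
    · rw [hUW, hsum]
    · exact (hS _ (union_subset hJ.1 hJ'.1) hU (hJ.2.1.mono subset_union_left) hUW).le
  linarith [sum_union_inter (s₁ := J) (s₂ := J') (f := θ), hJ.sum_neg hgen, hJ'.sum_neg hgen]

/-- The parameter `θ'` of the contraction step. -/
def splitParam (θ : V → ℝ) (a b : V) (J₁ : Finset V) : V → ℝ := fun i =>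
  if i = a then θ i - ∑ j ∈ J₁, θ j else if i = b then θ i + ∑ j ∈ J₁, θ j else θ i

lemma sum_splitParam_of_notMem_right {a b : V} {J₁ K : Finset V} (hb : b ∉ K) :
    ∑ i ∈ K, splitParam θ a b J₁ i = ∑ i ∈ K, θ i - if a ∈ K then ∑ j ∈ J₁, θ j else 0 := by
  rw [← sum_ite_eq' K a fun _ => ∑ j ∈ J₁, θ j, ← sum_sub_distrib]
  refine sum_congr rfl fun i hi => ?_
  have hib : i ≠ b := ne_of_mem_of_not_mem hi hb
  by_cases hia : i = a <;> simp [splitParam, hia, hib]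

lemma sum_splitParam_of_notMem_left {a b : V} {J₁ K : Finset V} (ha : a ∉ K) :
    ∑ i ∈ K, splitParam θ a b J₁ i = ∑ i ∈ K, θ i + if b ∈ K then ∑ j ∈ J₁, θ j else 0 := by
  rw [← sum_ite_eq' K b fun _ => ∑ j ∈ J₁, θ j, ← sum_add_distrib]
  refine sum_congr rfl fun i hi => ?_
  have hia : i ≠ a := ne_of_mem_of_not_mem hi ha
  by_cases hib : i = b
  · subst hib
    simp [splitParam, hia]
  · simp [splitParam, hia, hib]

lemma union_ne_of_subset_sdiff {W A J : Finset V} (hJ : J ⊆ W \ A) (hne : J ≠ W \ A) :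
    J ∪ A ≠ W := fun h => hne <| by
  rw [← h, union_sdiff_right,
    sdiff_eq_self_of_disjoint (disjoint_of_subset_left hJ sdiff_disjoint)]

/-- The side conditions of the constructor `TreeAssign.contract`. -/
structure IsSplitting (tl hd : E → V) (x xs : E → k) (W : Finset V) (S : Finset E)
    (θ : V → ℝ) (e : E) (a b : V) (J₁ : Finset V) : Prop where
  joins : Joins tl hd e a b
  destab : DestabSub tl hd θ x xs W ↑(S.erase e) J₁
  separates : ∀ J, DestabSub tl hd θ x xs W ↑(S.erase e) J → a ∈ J ∧ b ∉ J
  minimal : ∀ J, DestabSub tl hd θ x xs W ↑(S.erase e) J → ∑ i ∈ J₁, θ i ≤ ∑ i ∈ J, θ i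

lemma exists_isSplitting [Fintype V] (hS : StableSub tl hd θ x xs W ↑S) (hgen : GenericOn W θ)
    (hsum : ∑ i ∈ W, θ i = 0) (hunst : ¬ StableSub tl hd θ x xs W ↑(S.erase e)) :
    ∃ a b J₁, IsSplitting tl hd x xs W S θ e a b J₁ := by
  obtain ⟨J₀, hJ₀⟩ := exists_destabSub_of_not_stableSub hunst
  obtain ⟨J₁, hJ₁, hmin⟩ := exists_min_image
    (univ.filter (DestabSub tl hd θ x xs W ↑(S.erase e))) (fun J => ∑ i ∈ J, θ i)
    ⟨J₀, mem_filter.2 ⟨mem_univ _, hJ₀⟩⟩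
  replace hJ₁ := (mem_filter.1 hJ₁).2
  have hmin' : ∀ J, DestabSub tl hd θ x xs W ↑(S.erase e) J → ∑ i ∈ J₁, θ i ≤ ∑ i ∈ J, θ i :=
    fun J hJ => hmin J (mem_filter.2 ⟨mem_univ _, hJ⟩)
  have hsep : ∀ J, DestabSub tl hd θ x xs W ↑(S.erase e) J →
      (tl e ∈ J₁ ↔ tl e ∈ J) ∧ ¬ (tl e ∈ J ↔ hd e ∈ J) := fun J hJ =>
    ⟨hJ₁.tl_mem_iff hS hgen hsum hJ, hJ.not_iff hS⟩
  by_cases ht : tl e ∈ J₁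
  · exact ⟨tl e, hd e, J₁, Or.inl ⟨rfl, rfl⟩, hJ₁, fun J hJ => by have := hsep J hJ; tauto, hmin'⟩
  · exact ⟨hd e, tl e, J₁, Or.inr ⟨rfl, rfl⟩, hJ₁, fun J hJ => by have := hsep J hJ; tauto, hmin'⟩

namespace IsSplitting

variable {a b a' b' : V} {J₁ J₂ : Finset V}

lemma left_mem (h : IsSplitting tl hd x xs W S θ e a b J₁) : a ∈ J₁ :=
  (h.separates J₁ h.destab).1

lemma right_notMem (h : IsSplitting tl hd x xs W S θ e a b J₁) : b ∉ J₁ :=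
  (h.separates J₁ h.destab).2

lemma subset (h : IsSplitting tl hd x xs W S θ e a b J₁) : J₁ ⊆ W := h.destab.1

lemma notMem_restrictEdges_left (h : IsSplitting tl hd x xs W S θ e a b J₁) :
    e ∉ restrictEdges tl hd S J₁ :=
  h.joins.notMem_of_edgesIn (edgesIn_restrictEdges S J₁) h.right_notMem

lemma notMem_restrictEdges_right (h : IsSplitting tl hd x xs W S θ e a b J₁) :
    e ∉ restrictEdges tl hd S (W \ J₁) :=
  h.joins.symm.notMem_of_edgesIn (edgesIn_restrictEdges S _)
    fun ha => (mem_sdiff.1 ha).2 h.left_mem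

lemma sum_le (h : IsSplitting tl hd x xs W S θ e a b J₁) {J : Finset V} (hJW : J ⊆ W)
    (hne : J.Nonempty) (hneW : J ≠ W) (hcl : ClosedOn tl hd x xs ↑(S.erase e) J) :
    ∑ i ∈ J₁, θ i ≤ ∑ i ∈ J, θ i := by
  by_cases hJ : ∑ i ∈ J, θ i ≤ 0
  · exact h.minimal J ⟨hJW, hne, hneW, hcl, hJ⟩
  · linarith [h.destab.2.2.2.2]

lemma subset_of_isSplitting (h : IsSplitting tl hd x xs W S θ e a b J₁)
    (h' : IsSplitting tl hd x xs W S θ e a b J₂) (hgen : GenericOn W θ) (hb : b ∈ W) :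
    J₁ ⊆ J₂ := by
  have hβ : ∑ i ∈ J₁, θ i = ∑ i ∈ J₂, θ i :=
    (h.minimal _ h'.destab).antisymm (h'.minimal _ h.destab)
  have hI := h.sum_le (inter_subset_left.trans h.subset) ⟨a, mem_inter.2 ⟨h.left_mem, h'.left_mem⟩⟩
    (fun hI => h.right_notMem (mem_of_mem_inter_left (hI ▸ hb)))
    (h.destab.2.2.2.1.inter h'.destab.2.2.2.1)
  have hU := h.sum_le (union_subset h.subset h'.subset) (h.destab.2.1.mono subset_union_left)
    (fun hU => (mem_union.1 (hU ▸ hb)).elim h.right_notMem h'.right_notMem)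
    (h.destab.2.2.2.1.union h'.destab.2.2.2.1)
  have hdiff : ∑ i ∈ J₁ \ J₂, θ i = 0 := by
    rw [← sdiff_inter_self_left]
    linarith [sum_union_inter (s₁ := J₁) (s₂ := J₂) (f := θ),
      sum_sdiff (inter_subset_left : J₁ ∩ J₂ ⊆ J₁) (f := θ)]
  exact sdiff_eq_empty_iff_subset.1 <| hgen.eq_empty (sdiff_subset.trans h.subset)
    (fun hW => h.right_notMem (mem_sdiff.1 (hW ▸ hb)).1) hdiff

lemma unique (h : IsSplitting tl hd x xs W S θ e a b J₁)
    (h' : IsSplitting tl hd x xs W S θ e a' b' J₂) (hgen : GenericOn W θ) (hb : b ∈ W) :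
    a = a' ∧ b = b' ∧ J₁ = J₂ := by
  obtain ⟨rfl, rfl⟩ := h.joins.eq_of_mem h'.joins (h'.separates J₁ h.destab).1 h.right_notMem
  exact ⟨rfl, rfl, (h.subset_of_isSplitting h' hgen hb).antisymm
    (h'.subset_of_isSplitting h hgen hb)⟩

lemma genericOn_left (h : IsSplitting tl hd x xs W S θ e a b J₁) (hgen : GenericOn W θ) :
    GenericOn J₁ (splitParam θ a b J₁) := by
  intro J hJ hne hneJ₁
  rw [sum_splitParam_of_notMem_right fun hb => h.right_notMem (hJ hb)]
  split_ifs with ha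
  · have hdiff := hgen (J₁ \ J) (sdiff_subset.trans h.subset)
      (sdiff_nonempty.2 fun h' => hneJ₁ (hJ.antisymm h'))
      fun hW => (mem_sdiff.1 (hW ▸ h.subset h.left_mem)).2 ha
    exact fun h0 => hdiff (by linarith [sum_sdiff hJ (f := θ)])
  · rw [sub_zero]
    exact hgen J (hJ.trans h.subset) hne fun hW => h.destab.2.2.1 (h.subset.antisymm (hW ▸ hJ))

lemma genericOn_right (h : IsSplitting tl hd x xs W S θ e a b J₁) (hgen : GenericOn W θ) :
    GenericOn (W \ J₁) (splitParam θ a b J₁) := by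
  intro J hJ hne hneW
  have haJ : a ∉ J := fun ha => (mem_sdiff.1 (hJ ha)).2 h.left_mem
  rw [sum_splitParam_of_notMem_left haJ]
  split_ifs with hb
  · rw [← sum_union (disjoint_of_subset_left hJ sdiff_disjoint)]
    exact hgen _ (union_subset (hJ.trans sdiff_subset) h.subset) (hne.mono subset_union_left)
      (union_ne_of_subset_sdiff hJ hneW)
  · rw [add_zero]
    exact hgen J (hJ.trans sdiff_subset) hne fun hW => haJ (hW ▸ h.subset h.left_mem)

lemma sum_splitParam_left (h : IsSplitting tl hd x xs W S θ e a b J₁) :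
    ∑ i ∈ J₁, splitParam θ a b J₁ i = 0 := by
  rw [sum_splitParam_of_notMem_right h.right_notMem, if_pos h.left_mem, sub_self]

lemma sum_splitParam_right (h : IsSplitting tl hd x xs W S θ e a b J₁)
    (hsum : ∑ i ∈ W, θ i = 0) (hb : b ∈ W) : ∑ i ∈ W \ J₁, splitParam θ a b J₁ i = 0 := by
  rw [sum_splitParam_of_notMem_left fun ha => (mem_sdiff.1 ha).2 h.left_mem,
    if_pos (mem_sdiff.2 ⟨hb, h.right_notMem⟩), sum_sdiff h.subset, hsum]

lemma stableSub_left (h : IsSplitting tl hd x xs W S θ e a b J₁)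
    (hS : StableSub tl hd θ x xs W ↑S) (hgen : GenericOn W θ) :
    StableSub tl hd (splitParam θ a b J₁) x xs J₁ ↑(restrictEdges tl hd S J₁) := by
  intro J hJ hcl hne hneJ₁
  have hcl' : ClosedOn tl hd x xs ↑(S.erase e) J := h.destab.2.2.2.1.of_restrictEdges hJ
    (hcl.mono (coe_subset.2 (filter_subset_filter _ (erase_subset e S))))
  have hJW : J ⊆ W := hJ.trans h.subset
  have hneW : J ≠ W := fun hW => h.destab.2.2.1 (h.subset.antisymm (hW ▸ hJ))
  have hbJ : b ∉ J := fun hb => h.right_notMem (hJ hb)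
  refine lt_of_le_of_ne ?_ (h.genericOn_left hgen J hJ hne hneJ₁).symm
  rw [sum_splitParam_of_notMem_right hbJ]
  split_ifs with ha
  · linarith [h.sum_le hJW hne hneW hcl']
  · have hclS := hcl'.of_erase_of_iff (h.joins.mem_iff_mem (iff_of_false ha hbJ))
    linarith [hS J hJW hclS hne hneW]

lemma stableSub_right (h : IsSplitting tl hd x xs W S θ e a b J₁)
    (hS : StableSub tl hd θ x xs W ↑S) (hgen : GenericOn W θ) (hSW : EdgesIn tl hd S W) :
    StableSub tl hd (splitParam θ a b J₁) x xs (W \ J₁) ↑(restrictEdges tl hd S (W \ J₁)) := by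
  intro J hJ hcl hne hneW
  have hcl' : ClosedOn tl hd x xs ↑(S.erase e) (J ∪ J₁) :=
    h.destab.2.2.2.1.union_of_restrictEdges (hSW.mono (erase_subset e S)) hJ
      (hcl.mono (coe_subset.2 (filter_subset_filter _ (erase_subset e S))))
  have hUW : J ∪ J₁ ⊆ W := union_subset (hJ.trans sdiff_subset) h.subset
  have hUne : (J ∪ J₁).Nonempty := hne.mono subset_union_left
  have hUneW := union_ne_of_subset_sdiff hJ hneW
  have hdisj : Disjoint J J₁ := disjoint_of_subset_left hJ sdiff_disjoint
  refine lt_of_le_of_ne ?_ (h.genericOn_right hgen J hJ hne hneW).symm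
  rw [sum_splitParam_of_notMem_left fun ha => (mem_sdiff.1 (hJ ha)).2 h.left_mem]
  split_ifs with hb
  · have hclS := hcl'.of_erase_of_iff
      (h.joins.mem_iff_mem (iff_of_true (mem_union_right _ h.left_mem) (mem_union_left _ hb)))
    rw [← sum_union hdisj]
    exact (hS _ hUW hclS hUne hUneW).le
  · linarith [sum_union hdisj (f := θ), h.sum_le hUW hUne hUneW hcl']

lemma notMem_union {T₁ T₂ : Finset E}
    (h : IsSplitting tl hd x xs W S θ e a b J₁) (hT₁ : T₁ ⊆ restrictEdges tl hd S J₁)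
    (hT₂ : T₂ ⊆ restrictEdges tl hd S (W \ J₁)) : e ∉ T₁ ∪ T₂ := by
  rw [mem_union, not_or]
  exact ⟨fun he => h.notMem_restrictEdges_left (hT₁ he),
    fun he => h.notMem_restrictEdges_right (hT₂ he)⟩

end IsSplitting

structure Admissible (tl hd : E → V) (x xs : E → k) (W : Finset V) (S : Finset E)
    (θ : V → ℝ) : Prop where
  edgesIn : EdgesIn tl hd S W
  generic : GenericOn W θ
  sum_eq_zero : ∑ i ∈ W, θ i = 0
  stable : StableSub tl hd θ x xs W ↑S

namespace IsSplitting

variable {a b : V} {J₁ : Finset V}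

lemma admissible_left (h : IsSplitting tl hd x xs W S θ e a b J₁)
    (hS : StableSub tl hd θ x xs W ↑S) (hgen : GenericOn W θ) :
    Admissible tl hd x xs J₁ (restrictEdges tl hd S J₁) (splitParam θ a b J₁) :=
  ⟨edgesIn_restrictEdges S J₁, h.genericOn_left hgen, h.sum_splitParam_left,
    h.stableSub_left hS hgen⟩

lemma admissible_right (h : IsSplitting tl hd x xs W S θ e a b J₁)
    (hadm : Admissible tl hd x xs W S θ) (he : e ∈ S) :
    Admissible tl hd x xs (W \ J₁) (restrictEdges tl hd S (W \ J₁)) (splitParam θ a b J₁) :=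
  ⟨edgesIn_restrictEdges S _, h.genericOn_right hadm.generic,
    h.sum_splitParam_right hadm.sum_eq_zero (h.joins.mem_of_edgesIn hadm.edgesIn he).2,
    h.stableSub_right hadm.stable hadm.generic hadm.edgesIn⟩

end IsSplitting

end Stability

section Trees

variable {V E k : Type} [Fintype V] [Zero k] {tl hd : E → V} {x xs : E → k}

/-- `θ`-forward edges of `T` have `x ≠ 0` and `θ`-backward ones have `xs ≠ 0`. -/
def OrientedNonzero [DecidableEq E] (tl hd : E → V) (θ : V → ℝ) (x xs : E → k)
    (T : Finset E) : Prop :=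
  ∀ f ∈ T, (0 < ∑ j ∈ component tl hd (T.erase f) (hd f), θ j → x f ≠ 0) ∧
    (¬ 0 < ∑ j ∈ component tl hd (T.erase f) (hd f), θ j → xs f ≠ 0)

lemma orientedNonzero_insert_union [DecidableEq E] {A B : Finset V} {T₁ T₂ : Finset E} {e f : E}
    {a b : V} {θ θ' : V → ℝ} (hAB : Disjoint A B) (hT₁ : EdgesIn tl hd T₁ A)
    (hT₂ : EdgesIn tl hd T₂ B) (hspan : Spans tl hd T₂ B) (he : Joins tl hd e a b) (hb : b ∈ B)
    (hθ' : ∀ K ⊆ A, ∑ j ∈ K, θ' j = ∑ j ∈ K, θ j + if a ∈ K then ∑ j ∈ B, θ j else 0)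
    (h₁ : OrientedNonzero tl hd θ' x xs T₁) (hf : f ∈ T₁) :
    (0 < ∑ j ∈ component tl hd ((insert e (T₁ ∪ T₂)).erase f) (hd f), θ j → x f ≠ 0) ∧
      (¬ 0 < ∑ j ∈ component tl hd ((insert e (T₁ ∪ T₂)).erase f) (hd f), θ j → xs f ≠ 0) := by
  have hef : e ≠ f := fun hef =>
    he.notMem_of_edgesIn hT₁ (disjoint_right.1 hAB hb) (hef ▸ hf)
  have hf₂ : f ∉ T₂ := disjoint_left.1 (hT₁.disjoint hAB hT₂) hf
  have hv : hd f ∈ A := (hT₁ f hf).2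
  have hT₁' : EdgesIn tl hd (T₁.erase f) A := hT₁.mono (erase_subset f T₁)
  have hK := component_subset_of_edgesIn hT₁' hv
  have hsum : ∑ j ∈ component tl hd ((insert e (T₁ ∪ T₂)).erase f) (hd f), θ j =
      ∑ j ∈ component tl hd (T₁.erase f) (hd f), θ' j := by
    rw [erase_insert_of_ne hef, erase_union_distrib, erase_eq_of_notMem hf₂,
      component_insert_union hAB hT₁' hT₂ hspan he hb hv, hθ' _ hK]
    split_ifs
    · exact sum_union (disjoint_of_subset_left hK hAB)
    · rw [add_zero]
  rw [hsum]
  exact h₁ f hf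

variable [LinearOrder E] {W : Finset V} {S T T' : Finset E} {θ : V → ℝ}

lemma TreeAssign.subset (hT : TreeAssign tl hd x xs W S θ T) : T ⊆ S := by
  induction hT with
  | base => exact empty_subset _
  | delete _ _ _ e _ _ _ _ _ _ ih => exact ih.trans (erase_subset e _)
  | contract _ _ _ _ _ _ he _ _ _ _ _ _ _ _ _ _ _ ih₁ ih₂ =>
    exact insert_subset he (union_subset (ih₁.trans (filter_subset _ _))
      (ih₂.trans (filter_subset _ _)))

lemma TreeAssign.card_add_one (hT : TreeAssign tl hd x xs W S θ T) : T.card + 1 = W.card := by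
  induction hT with
  | base _ _ _ hW => simp [hW]
  | delete _ _ _ _ _ _ _ _ _ _ ih => exact ih
  | contract W S θ e a b _ _ _ hab J₁ hJ₁ hall hmin T₁ T₂ ih₁ ih₂ IH₁ IH₂ =>
    have h : IsSplitting tl hd x xs W S θ e a b J₁ := ⟨hab, hJ₁, hall, hmin⟩
    have hT₁ := (edgesIn_restrictEdges S J₁).mono ih₁.subset
    have hT₂ := (edgesIn_restrictEdges S (W \ J₁)).mono ih₂.subset
    rw [card_insert_of_notMem (h.notMem_union ih₁.subset ih₂.subset),
      card_union_of_disjoint (hT₁.disjoint disjoint_sdiff hT₂),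
      ← card_sdiff_add_card_eq_card h.subset]
    omega

lemma TreeAssign.spans (hT : TreeAssign tl hd x xs W S θ T) (hSW : EdgesIn tl hd S W) :
    Spans tl hd T W := by
  induction hT with
  | base _ _ _ hW =>
    intro u hu v hv
    rw [card_le_one.1 hW.le u hu v hv]
    exact .refl v
  | delete _ _ _ _ _ _ _ _ _ _ IH => exact IH (hSW.mono (erase_subset _ _))
  | contract W S θ e a b he _ _ hab J₁ hJ₁ hall hmin T₁ T₂ _ _ IH₁ IH₂ =>
    have h : IsSplitting tl hd x xs W S θ e a b J₁ := ⟨hab, hJ₁, hall, hmin⟩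
    have hspan₁ := IH₁ (edgesIn_restrictEdges S J₁)
    have hspan₂ := IH₂ (edgesIn_restrictEdges S (W \ J₁))
    have hb : b ∈ W \ J₁ := mem_sdiff.2 ⟨(h.joins.mem_of_edgesIn hSW he).2, h.right_notMem⟩
    have hjoin : ∀ u ∈ W, joinedRel tl hd ↑(insert e (T₁ ∪ T₂)) a u := fun u hu => by
      by_cases hu₁ : u ∈ J₁
      · exact joinedRel_mono (coe_subset.2 fun f hf => by simp [hf])
          (hspan₁ a h.left_mem u hu₁)
      · exact .trans _ _ _ (joinedRel_of_joins (by simp) hab)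
          (joinedRel_mono (coe_subset.2 fun f hf => by simp [hf])
            (hspan₂ b hb u (mem_sdiff.2 ⟨hu, hu₁⟩)))
    exact fun u hu v hv => .trans _ _ _ (.symm _ _ (hjoin u hu)) (hjoin v hv)

lemma IsSplitting.orientedNonzero_insert {e : E} {a b : V} {J₁ : Finset V} {T₁ T₂ : Finset E}
    (h : IsSplitting tl hd x xs W S θ e a b J₁) (hadm : Admissible tl hd x xs W S θ)
    (he : e ∈ S)
    (hT₁ : TreeAssign tl hd x xs J₁ (restrictEdges tl hd S J₁) (splitParam θ a b J₁) T₁)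
    (hT₂ : TreeAssign tl hd x xs (W \ J₁) (restrictEdges tl hd S (W \ J₁))
      (splitParam θ a b J₁) T₂)
    (h₁ : OrientedNonzero tl hd (splitParam θ a b J₁) x xs T₁)
    (h₂ : OrientedNonzero tl hd (splitParam θ a b J₁) x xs T₂) :
    OrientedNonzero tl hd θ x xs (insert e (T₁ ∪ T₂)) := by
  have hA := (edgesIn_restrictEdges S J₁).mono hT₁.subset
  have hB := (edgesIn_restrictEdges S (W \ J₁)).mono hT₂.subset
  have hspan₁ := hT₁.spans (edgesIn_restrictEdges S J₁)
  have hspan₂ := hT₂.spans (edgesIn_restrictEdges S (W \ J₁))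
  have ha : a ∈ J₁ := h.left_mem
  have hb : b ∈ W \ J₁ :=
    mem_sdiff.2 ⟨(h.joins.mem_of_edgesIn hadm.edgesIn he).2, h.right_notMem⟩
  have hsumB : ∑ j ∈ W \ J₁, θ j = -∑ j ∈ J₁, θ j := by
    linarith [sum_sdiff h.subset (f := θ), hadm.sum_eq_zero]
  intro f hf
  rcases mem_insert.1 hf with rfl | hf
  · rw [erase_insert (h.notMem_union hT₁.subset hT₂.subset)]
    rcases h.joins with ⟨rfl, rfl⟩ | ⟨rfl, rfl⟩
    · rw [union_comm, component_union_of_spans disjoint_sdiff.symm hB hA hspan₂ hb, hsumB]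
      exact ⟨fun _ => h.destab.x_ne_zero hadm.stable h.right_notMem,
        fun hn => absurd (neg_pos.2 (h.destab.sum_neg hadm.generic)) hn⟩
    · rw [component_union_of_spans disjoint_sdiff hA hB hspan₁ ha]
      exact ⟨fun hp => absurd hp (not_lt.2 h.destab.2.2.2.2),
        fun _ => h.destab.xs_ne_zero hadm.stable h.right_notMem⟩
  rcases mem_union.1 hf with hf | hf
  · refine orientedNonzero_insert_union disjoint_sdiff hA hB hspan₂ h.joins hb
      (fun K hK => ?_) h₁ hf
    rw [sum_splitParam_of_notMem_right fun hbK => h.right_notMem (hK hbK), hsumB]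
    split_ifs <;> ring
  · rw [union_comm]
    exact orientedNonzero_insert_union disjoint_sdiff.symm hB hA hspan₁ h.joins.symm ha
      (fun K hK => sum_splitParam_of_notMem_left fun haK => (mem_sdiff.1 (hK haK)).2 ha) h₂ hf

lemma TreeAssign.orientedNonzero (hT : TreeAssign tl hd x xs W S θ T)
    (hadm : Admissible tl hd x xs W S θ) : OrientedNonzero tl hd θ x xs T := by
  induction hT with
  | base => simp [OrientedNonzero]
  | delete _ _ _ _ _ _ _ hstab _ _ IH =>
    exact IH ⟨hadm.edgesIn.mono (erase_subset _ _), hadm.generic, hadm.sum_eq_zero, hstab⟩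
  | contract W S θ e a b he _ _ hab J₁ hJ₁ hall hmin T₁ T₂ ih₁ ih₂ IH₁ IH₂ =>
    have h : IsSplitting tl hd x xs W S θ e a b J₁ := ⟨hab, hJ₁, hall, hmin⟩
    exact h.orientedNonzero_insert hadm he ih₁ ih₂
      (IH₁ (h.admissible_left hadm.stable hadm.generic)) (IH₂ (h.admissible_right hadm he))

lemma TreeAssign.unique (h₁ : TreeAssign tl hd x xs W S θ T)
    (h₂ : TreeAssign tl hd x xs W S θ T') (hSW : EdgesIn tl hd S W) (hgen : GenericOn W θ) :
    T = T' := by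
  induction h₁ generalizing T' with
  | base _ _ _ hW =>
    cases h₂ with
    | base => rfl
    | delete _ _ _ e he hne => exact absurd (hSW.tl_eq_hd_of_card_eq_one hW he) hne
    | contract _ _ _ e _ _ he hne => exact absurd (hSW.tl_eq_hd_of_card_eq_one hW he) hne
  | delete W S θ e he hne hsmall hstab T _ IH =>
    cases h₂ with
    | base _ _ _ hW => exact absurd (hSW.tl_eq_hd_of_card_eq_one hW he) hne
    | delete _ _ _ e' he' hne' hsmall' _ _ ih' =>
      obtain rfl := (hsmall e' he' hne').antisymm (hsmall' e he hne)
      exact IH ih' (hSW.mono (erase_subset _ _)) hgen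
    | contract _ _ _ e' _ _ he' hne' hsmall' _ _ hJ₁ =>
      obtain rfl := (hsmall e' he' hne').antisymm (hsmall' e he hne)
      exact absurd hstab hJ₁.not_stableSub
  | contract W S θ e a b he hne hsmall hab J₁ hJ₁ hall hmin T₁ T₂ _ _ IH₁ IH₂ =>
    cases h₂ with
    | base _ _ _ hW => exact absurd (hSW.tl_eq_hd_of_card_eq_one hW he) hne
    | delete _ _ _ e' he' hne' hsmall' hstab' =>
      obtain rfl := (hsmall e' he' hne').antisymm (hsmall' e he hne)
      exact absurd hstab' hJ₁.not_stableSub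
    | contract _ _ _ e' a' b' he' hne' hsmall' hab' J₁' hJ₁' hall' hmin' T₁' T₂' ih₁' ih₂' =>
      obtain rfl := (hsmall e' he' hne').antisymm (hsmall' e he hne)
      have h : IsSplitting tl hd x xs W S θ e a b J₁ := ⟨hab, hJ₁, hall, hmin⟩
      obtain ⟨rfl, rfl, rfl⟩ :=
        h.unique ⟨hab', hJ₁', hall', hmin'⟩ hgen (h.joins.mem_of_edgesIn hSW he).2
      rw [IH₁ ih₁' (edgesIn_restrictEdges S J₁) (h.genericOn_left hgen),
        IH₂ ih₂' (edgesIn_restrictEdges S (W \ J₁)) (h.genericOn_right hgen)]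

theorem exists_treeAssign (W : Finset V) (S : Finset E) (θ : V → ℝ) (hW : W.Nonempty)
    (hadm : Admissible tl hd x xs W S θ) : ∃ T, TreeAssign tl hd x xs W S θ T := by
  by_cases hW1 : W.card = 1
  · exact ⟨∅, .base W S θ hW1⟩
  obtain ⟨f, hfS, hf⟩ := exists_nonloop hadm.stable hadm.sum_eq_zero hW hW1
  have hN : (S.filter fun f => tl f ≠ hd f).Nonempty := ⟨f, mem_filter.2 ⟨hfS, hf⟩⟩
  obtain ⟨he, hne⟩ := mem_filter.1 (min'_mem _ hN)
  set e := (S.filter fun f => tl f ≠ hd f).min' hN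
  have hsmall : ∀ f ∈ S, tl f ≠ hd f → e ≤ f := fun f hf hl =>
    min'_le _ f (mem_filter.2 ⟨hf, hl⟩)
  by_cases hstab : StableSub tl hd θ x xs W ↑(S.erase e)
  · obtain ⟨T, hT⟩ := exists_treeAssign W (S.erase e) θ hW
      ⟨hadm.edgesIn.mono (erase_subset e S), hadm.generic, hadm.sum_eq_zero, hstab⟩
    exact ⟨T, .delete W S θ e he hne hsmall hstab T hT⟩
  obtain ⟨a, b, J₁, h⟩ := exists_isSplitting hadm.stable hadm.generic hadm.sum_eq_zero hstab
  obtain ⟨T₁, hT₁⟩ := exists_treeAssign J₁ (restrictEdges tl hd S J₁) _ h.destab.2.1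
    (h.admissible_left hadm.stable hadm.generic)
  obtain ⟨T₂, hT₂⟩ := exists_treeAssign (W \ J₁) (restrictEdges tl hd S (W \ J₁)) _
    (sdiff_nonempty.2 fun hW => h.destab.2.2.1 (h.subset.antisymm hW))
    (h.admissible_right hadm he)
  exact ⟨_, .contract W S θ e a b he hne hsmall h.joins J₁ h.destab h.separates h.minimal
    T₁ T₂ hT₁ hT₂⟩
termination_by S.card
decreasing_by
  · exact card_lt_card (erase_ssubset he)
  · exact card_restrictEdges_lt he h.notMem_restrictEdges_left
  · exact card_restrictEdges_lt he h.notMem_restrictEdges_right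

end Trees

theorem statement14_general {V E : Type} [Fintype V] [Nonempty V] [Fintype E] [LinearOrder E]
    (tl hd : E → V)
    (k : Type) [Field k]
    (θ : V → ℝ) (hgen : Generic θ) (hθ : ∑ i, θ i = 0)
    (x xs : E → k)
    (hstab : StableSub tl hd θ x xs Finset.univ Set.univ) :
    (∃! T : Finset E, TreeAssign tl hd x xs Finset.univ Finset.univ θ T) ∧
    ∀ T : Finset E, TreeAssign tl hd x xs Finset.univ Finset.univ θ T →
      IsSpanningTree tl hd T ∧
      ∀ e ∈ T,
        ((0 < ∑ j ∈ component tl hd (T.erase e) (hd e), θ j) → x e ≠ 0) ∧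
        (¬ (0 < ∑ j ∈ component tl hd (T.erase e) (hd e), θ j) → xs e ≠ 0) := by
  have hadm : Admissible tl hd x xs univ univ θ :=
    ⟨fun _ _ => ⟨mem_univ _, mem_univ _⟩, fun J _ => hgen J, hθ, by rwa [coe_univ]⟩
  obtain ⟨T₀, hT₀⟩ := exists_treeAssign univ univ θ univ_nonempty hadm
  refine ⟨⟨T₀, hT₀, fun T hT => hT.unique hT₀ hadm.edgesIn hadm.generic⟩, fun T hT => ?_⟩
  refine ⟨⟨fun u v => hT.spans hadm.edgesIn u (mem_univ u) v (mem_univ v), ?_⟩,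
    hT.orientedNonzero hadm⟩
  rw [hT.card_add_one, card_univ]

/-- the tree-assignment recursion is well defined on `θ`-stable pairs and
produces a spanning tree `T`, with `x e ≠ 0` for `θ`-forward edges of `T` and
`xs e ≠ 0` for `θ`-backward edges of `T`. -/
theorem statement14 {V E : Type} [Fintype V] [Nonempty V] [Fintype E] [LinearOrder E]
    (tl hd : E → V) (hQ : IsConn tl hd Set.univ)
    (k : Type) [Field k]
    (θ : V → ℝ) (hgen : Generic θ) (hθ : ∑ i, θ i = 0)
    (x xs : E → k)
    (hstab : StableSub tl hd θ x xs Finset.univ Set.univ) :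
    (∃! T : Finset E, TreeAssign tl hd x xs Finset.univ Finset.univ θ T) ∧
    ∀ T : Finset E, TreeAssign tl hd x xs Finset.univ Finset.univ θ T →
      IsSpanningTree tl hd T ∧
      ∀ e ∈ T,
        ((0 < ∑ j ∈ component tl hd (T.erase e) (hd e), θ j) → x e ≠ 0) ∧
        (¬ (0 < ∑ j ∈ component tl hd (T.erase e) (hd e), θ j) → xs e ≠ 0) :=
  statement14_general tl hd k θ hgen hθ x xs hstab

end
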